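/- arXiv:1903.08559 — 6 statements merged into one kernel-verified Lean document; each statement's English description precedes it below -/
import Mathlib

section
/- Let (p_i) be a probability distribution supported on ℕ and π : ℕ^ℕ → [0,1) defined by π((n_j)) = lim_{j→∞} T_{n_1} ∘ ⋯ ∘ T_{n_j}(0), where T_n x = p_n x + p̂_n. Then π is surjective onto [0,1). -/
/-!
Greedy expansion. The intervals `[p̂ₙ, p̂ₙ₊₁) = Tₙ [0,1)` tile `[0,1)`, so every `y ∈ [0,1)` is
`Tₙ z` for a digit `n` and some `z ∈ [0,1)`. Iterating from `x` gives digits `aₖ` and points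
`yₖ ∈ [0,1)` with `yₖ = T_{aₖ} yₖ₊₁`; unfolding `N` steps,
`x = ∑_{j<N} (∏_{i<j} p_{aᵢ}) p̂_{aⱼ} + (∏_{i<N} p_{aᵢ}) y_N`.
The remainder is at most `cᴺ`, where `c < 1` bounds all `pᵢ`, so the series converges to `x`.
-/

open Filter Topology Finset

theorem exists_le_lt_succ_of_le_of_lt {α : Type*} [LinearOrder α] {s : ℕ → α} {y : α}
    (h0 : s 0 ≤ y) {m : ℕ} (hm : y < s m) : ∃ n, s n ≤ y ∧ y < s (n + 1) := by
  induction m with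
  | zero => exact absurd h0 hm.not_ge
  | succ m ih =>
    by_cases h : y < s m
    · exact ih h
    · exact ⟨m, not_lt.mp h, hm⟩

theorem eq_sum_range_prod_mul_add {R : Type*} [CommRing R] {u v y : ℕ → R}
    (h : ∀ k, y k = u k + v k * y (k + 1)) (N : ℕ) :
    y 0 = ∑ j ∈ range N, (∏ i ∈ range j, v i) * u j + (∏ i ∈ range N, v i) * y N := by
  induction N with
  | zero => simp
  | succ N ih =>
    rw [ih, h N, sum_range_succ, prod_range_succ]
    ring

theorem hasSum_prod_mul_of_recurrence {u v y : ℕ → ℝ} (h : ∀ k, y k = u k + v k * y (k + 1))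
    (hu : ∀ k, 0 ≤ u k) (hv : ∀ k, 0 ≤ v k)
    (hrem : Tendsto (fun N ↦ (∏ i ∈ range N, v i) * y N) atTop (𝓝 0)) :
    HasSum (fun j ↦ (∏ i ∈ range j, v i) * u j) (y 0) := by
  refine (hasSum_iff_tendsto_nat_of_nonneg
    (fun j ↦ mul_nonneg (prod_nonneg fun i _ ↦ hv i) (hu j)) _).mpr ?_
  have hpartial : ∀ N, ∑ j ∈ range N, (∏ i ∈ range j, v i) * u j
      = y 0 - (∏ i ∈ range N, v i) * y N := fun N ↦ by
    rw [eq_sum_range_prod_mul_add h N]; ring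
  simpa [hpartial] using (tendsto_const_nhds (x := y 0)).sub hrem

theorem tendsto_prod_mul_zero_of_le {v y : ℕ → ℝ} {c : ℝ} (hv : ∀ i, 0 ≤ v i)
    (hvc : ∀ i, v i ≤ c) (hc : c < 1) (hy : ∀ k, y k ∈ Set.Icc 0 1) :
    Tendsto (fun N ↦ (∏ i ∈ range N, v i) * y N) atTop (𝓝 0) := by
  have hprod : ∀ N, 0 ≤ ∏ i ∈ range N, v i := fun N ↦ prod_nonneg fun i _ ↦ hv i
  refine squeeze_zero (fun N ↦ mul_nonneg (hprod N) (hy N).1) (fun N ↦ ?_)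
    (tendsto_pow_atTop_nhds_zero_of_lt_one ((hv 0).trans (hvc 0)) hc)
  calc (∏ i ∈ range N, v i) * y N ≤ ∏ i ∈ range N, v i :=
        mul_le_of_le_one_right (hprod N) (hy N).2
    _ ≤ ∏ _i ∈ range N, c := prod_le_prod (fun i _ ↦ hv i) fun i _ ↦ hvc i
    _ = c ^ N := by rw [prod_const, card_range]

section Distribution

variable {p : ℕ → ℝ}

theorem add_le_one_of_ne (hp : ∀ i, 0 < p i) (hsum : HasSum p 1) {i j : ℕ} (hij : i ≠ j) :
    p i + p j ≤ 1 := by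
  simpa [Finset.sum_pair hij] using sum_le_hasSum {i, j} (fun k _ ↦ (hp k).le) hsum

-- Any `pᵢ` with `i ≠ j` leaves room for `pⱼ`; comparing with `p₀` and `p₁` covers every index.
theorem exists_lt_one_forall_le (hp : ∀ i, 0 < p i) (hsum : HasSum p 1) :
    ∃ c < 1, ∀ i, p i ≤ c := by
  refine ⟨1 - min (p 0) (p 1), by linarith [lt_min (hp 0) (hp 1)], fun i ↦ ?_⟩
  rcases eq_or_ne i 0 with rfl | hi
  · linarith [add_le_one_of_ne hp hsum (zero_ne_one : (0 : ℕ) ≠ 1), min_le_right (p 0) (p 1)]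
  · linarith [add_le_one_of_ne hp hsum hi, min_le_left (p 0) (p 1)]

theorem exists_eq_sum_range_add_mul (hp : ∀ i, 0 < p i) (hsum : HasSum p 1) {y : ℝ}
    (hy : y ∈ Set.Ico 0 1) : ∃ n, ∃ z ∈ Set.Ico (0 : ℝ) 1, y = ∑ i ∈ range n, p i + p n * z := by
  obtain ⟨m, hm⟩ := (hsum.tendsto_sum_nat.eventually (eventually_gt_nhds hy.2)).exists
  obtain ⟨n, hle, hlt⟩ :=
    exists_le_lt_succ_of_le_of_lt (s := fun n ↦ ∑ i ∈ range n, p i) (by simpa using hy.1) hm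
  rw [sum_range_succ] at hlt
  refine ⟨n, (y - ∑ i ∈ range n, p i) / p n, ⟨?_, ?_⟩, ?_⟩
  · exact div_nonneg (sub_nonneg.mpr hle) (hp n).le
  · rw [div_lt_one (hp n)]; linarith
  · rw [mul_div_cancel₀ _ (hp n).ne']; ring

theorem exists_greedy_expansion (hp : ∀ i, 0 < p i) (hsum : HasSum p 1) {x : ℝ}
    (hx : x ∈ Set.Ico 0 1) : ∃ (a : ℕ → ℕ) (y : ℕ → ℝ), y 0 = x ∧ (∀ k, y k ∈ Set.Ico 0 1) ∧
      ∀ k, y k = ∑ i ∈ range (a k), p i + p (a k) * y (k + 1) := by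
  choose! d T hT hdT using fun y (hy : y ∈ Set.Ico (0 : ℝ) 1) ↦ exists_eq_sum_range_add_mul hp hsum hy
  have hmaps : ∀ k, T^[k] x ∈ Set.Ico 0 1 := fun k ↦ Set.MapsTo.iterate hT k hx
  refine ⟨fun k ↦ d (T^[k] x), fun k ↦ T^[k] x, rfl, hmaps, fun k ↦ ?_⟩
  simpa only [Function.iterate_succ_apply'] using hdT _ (hmaps k)

end Distribution

/-- The coding map `π` is surjective onto `[0,1)`. -/
theorem coding_surjective
    (p : ℕ → ℝ) (hp : ∀ i, p i ∈ Set.Ioo (0:ℝ) 1) (hsum : HasSum p 1)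
    (phat : ℕ → ℝ) (hphat : ∀ n, phat n = ∑ i ∈ Finset.range n, p i)
    (π : (ℕ → ℕ) → ℝ)
    (hπ : ∀ a : ℕ → ℕ, π a = phat (a 0) +
      ∑' j : ℕ, (∏ i ∈ Finset.range (j + 1), p (a i)) * phat (a (j + 1))) :
    ∀ x ∈ Set.Ico (0:ℝ) 1, ∃ a : ℕ → ℕ, π a = x := by
  intro x hx
  obtain rfl : phat = _ := funext hphat
  have hpos : ∀ i, 0 < p i := fun i ↦ (hp i).1
  obtain ⟨a, y, rfl, hy, hrec⟩ := exists_greedy_expansion hpos hsum hx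
  obtain ⟨c, hc, hpc⟩ := exists_lt_one_forall_le hpos hsum
  have hseries := hasSum_prod_mul_of_recurrence hrec
    (fun k ↦ sum_nonneg fun i _ ↦ (hpos i).le) (fun k ↦ (hpos (a k)).le)
    (tendsto_prod_mul_zero_of_le (fun i ↦ (hpos (a i)).le) (fun i ↦ hpc (a i)) hc
      fun k ↦ Set.Ico_subset_Icc_self (hy k))
  refine ⟨a, ?_⟩
  rw [hπ, ((hasSum_nat_add_iff' 1).mpr hseries).tsum_eq]
  simp
end

section
/- Let (p_i) be a probability distribution supported on ℕ and π the induced coding map. If B ⊆ ℕ^ℕ is the set of bounded sequences, then the Hausdorff dimension of π(B) equals 1. -/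
/-!
Fix `s < 1`. Since `p 0 ^ s > p 0` and `∑ p i = 1`, some `k ≥ 1` has `∑_{i ≤ k} p i ^ s ≥ 1`;
renormalising the weights `p i ^ s`, `i ≤ k`, gives a probability vector `q` whose code map
covers `[0, 1)` on sequences with digits at most `k`. On these sequences the map from `p`-codes
to `q`-codes is `s`-Hölder: a cylinder of `p`-length `P` has `q`-length at most `P ^ s`, and,
because `∑_{i ≤ k} p i < 1`, distinct `p`-cylinders of the same generation are separated by gaps
proportional to their lengths. Hence `1 ≤ dimH π(B_k) / s`, where `B_k` is the set of sequences
with digits at most `k`.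
-/

open Set Finset Filter Topology
open scoped NNReal ENNReal

/-- `digitCode q a = lim_j T_{a 0} ∘ ⋯ ∘ T_{a j} 0` for `T_n x = q̂ n + q n * x`, where
`q̂ n = q 0 + ⋯ + q (n - 1)`. -/
noncomputable def digitCode (q : ℕ → ℝ) (a : ℕ → ℕ) : ℝ :=
  ∑' j, (∏ i ∈ range j, q (a i)) * ∑ i ∈ range (a j), q i

/-- `[0, c]` is mapped into itself by each of the maps `T_i`, `i ≤ k`. -/
structure InvariantInterval (q : ℕ → ℝ) (k : ℕ) (c : ℝ) : Prop where
  nonneg : 0 ≤ c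
  weight_nonneg : ∀ i ≤ k, 0 ≤ q i
  map_le : ∀ i ≤ k, ∑ j ∈ range i, q j + q i * c ≤ c

lemma sum_range_mono_of_nonneg {q : ℕ → ℝ} {k m n : ℕ} (hq : ∀ i ≤ k, 0 ≤ q i) (hmn : m ≤ n)
    (hn : n ≤ k + 1) : ∑ i ∈ range m, q i ≤ ∑ i ∈ range n, q i :=
  sum_le_sum_of_subset_of_nonneg (range_subset_range.2 hmn)
    fun i hi _ => hq i (by rw [Finset.mem_range] at hi; omega)

lemma digitCode_eq_add_tsum {q : ℕ → ℝ} {a : ℕ → ℕ}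
    (hs : Summable fun j => (∏ i ∈ range j, q (a i)) * ∑ i ∈ range (a j), q i) :
    digitCode q a = ∑ i ∈ range (a 0), q i +
      ∑' j, (∏ i ∈ range (j + 1), q (a i)) * ∑ i ∈ range (a (j + 1)), q i := by
  rw [digitCode, hs.tsum_eq_zero_add]
  simp

namespace InvariantInterval

variable {q : ℕ → ℝ} {k : ℕ} {c ε : ℝ} {a b : ℕ → ℕ}

lemma of_sum_le_one (hq : ∀ i ≤ k, 0 ≤ q i) (hsum : ∑ i ∈ range (k + 1), q i ≤ 1) :
    InvariantInterval q k 1 where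
  nonneg := zero_le_one
  weight_nonneg := hq
  map_le i hi := by
    rw [mul_one, ← sum_range_succ]
    exact (sum_range_mono_of_nonneg hq (by omega) le_rfl).trans hsum

/-- The fixed point of `T_k` works. -/
lemma exists_lt_one (hq : ∀ i ≤ k, 0 ≤ q i) (hsum : ∑ i ∈ range (k + 1), q i < 1) :
    ∃ c < 1, InvariantInterval q k c := by
  rw [sum_range_succ] at hsum
  have hk0 : 0 ≤ ∑ j ∈ range k, q j :=
    sum_nonneg fun j hj => hq j (by rw [Finset.mem_range] at hj; omega)
  have hk : 0 < 1 - q k := by linarith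
  set c := (∑ j ∈ range k, q j) / (1 - q k)
  have hfix : ∑ j ∈ range k, q j + q k * c = c := by
    simp only [c]; field_simp; ring
  have hc1 : c < 1 := by rw [div_lt_one hk]; linarith
  have hkc : ∑ j ∈ range k, q j ≤ c := le_div_self hk0 hk (by linarith [hq k le_rfl])
  refine ⟨c, hc1, hk0.trans hkc, hq, fun i hi => ?_⟩
  rcases hi.lt_or_eq with hi | rfl
  · calc ∑ j ∈ range i, q j + q i * c ≤ ∑ j ∈ range (i + 1), q j := by
          rw [sum_range_succ]; nlinarith [hq i hi.le]
      _ ≤ ∑ j ∈ range k, q j := sum_range_mono_of_nonneg hq hi (by omega)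
      _ ≤ c := hkc
  · exact hfix.le


lemma digitCode_term_nonneg (h : InvariantInterval q k c) (ha : ∀ j, a j ≤ k) (j : ℕ) :
    0 ≤ (∏ i ∈ range j, q (a i)) * ∑ i ∈ range (a j), q i :=
  mul_nonneg (prod_nonneg fun i _ => h.weight_nonneg _ (ha i))
    (sum_nonneg fun i hi => h.weight_nonneg i (by rw [Finset.mem_range] at hi; linarith [ha j]))

lemma sum_range_digitCode_term_le (h : InvariantInterval q k c) (ha : ∀ j, a j ≤ k) (n : ℕ) :
    ∑ j ∈ range n, (∏ i ∈ range j, q (a i)) * ∑ i ∈ range (a j), q i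
      ≤ c - c * ∏ i ∈ range n, q (a i) := by
  have hterm : ∀ j, (∏ i ∈ range j, q (a i)) * ∑ i ∈ range (a j), q i
      ≤ c * ∏ i ∈ range j, q (a i) - c * ∏ i ∈ range (j + 1), q (a i) := fun j => by
    have hP : 0 ≤ ∏ i ∈ range j, q (a i) := prod_nonneg fun i _ => h.weight_nonneg _ (ha i)
    rw [prod_range_succ]
    nlinarith [mul_le_mul_of_nonneg_left (h.map_le _ (ha j)) hP]
  calc _ ≤ ∑ j ∈ range n, (c * ∏ i ∈ range j, q (a i) - c * ∏ i ∈ range (j + 1), q (a i)) :=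
        sum_le_sum fun j _ => hterm j
    _ = c - c * ∏ i ∈ range n, q (a i) := by rw [sum_range_sub']; simp

lemma summable_digitCode_term (h : InvariantInterval q k c) (ha : ∀ j, a j ≤ k) :
    Summable fun j => (∏ i ∈ range j, q (a i)) * ∑ i ∈ range (a j), q i :=
  summable_of_sum_range_le (c := c) (h.digitCode_term_nonneg ha) fun n =>
    (h.sum_range_digitCode_term_le ha n).trans
      (by simpa using mul_nonneg h.nonneg (prod_nonneg fun i _ => h.weight_nonneg _ (ha i)))

lemma digitCode_nonneg (h : InvariantInterval q k c) (ha : ∀ j, a j ≤ k) : 0 ≤ digitCode q a :=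
  tsum_nonneg (h.digitCode_term_nonneg ha)

lemma digitCode_le (h : InvariantInterval q k c) (ha : ∀ j, a j ≤ k) : digitCode q a ≤ c :=
  Real.tsum_le_of_sum_range_le (h.digitCode_term_nonneg ha) fun n =>
    (h.sum_range_digitCode_term_le ha n).trans
      (by simpa using mul_nonneg h.nonneg (prod_nonneg fun i _ => h.weight_nonneg _ (ha i)))

lemma digitCode_eq_sum_add_mul (h : InvariantInterval q k c) (ha : ∀ j, a j ≤ k) (n : ℕ) :
    digitCode q a = ∑ j ∈ range n, (∏ i ∈ range j, q (a i)) * ∑ i ∈ range (a j), q i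
      + (∏ i ∈ range n, q (a i)) * digitCode q (fun j => a (n + j)) := by
  rw [digitCode, ← (h.summable_digitCode_term ha).sum_add_tsum_nat_add n, digitCode,
    ← tsum_mul_left]
  congr 2 with j
  rw [add_comm j n, prod_range_add, mul_assoc]

lemma digitCode_sub_eq_mul (h : InvariantInterval q k c) (ha : ∀ j, a j ≤ k) (hb : ∀ j, b j ≤ k)
    {n : ℕ} (hab : ∀ i < n, a i = b i) :
    digitCode q a - digitCode q b = (∏ i ∈ range n, q (a i)) *
      (digitCode q (fun j => a (n + j)) - digitCode q (fun j => b (n + j))) := by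
  have hP : ∀ m ≤ n, ∏ i ∈ range m, q (a i) = ∏ i ∈ range m, q (b i) := fun m hm =>
    prod_congr rfl fun i hi => by rw [hab i (by rw [Finset.mem_range] at hi; omega)]
  have hS : ∑ j ∈ range n, (∏ i ∈ range j, q (a i)) * ∑ i ∈ range (a j), q i
      = ∑ j ∈ range n, (∏ i ∈ range j, q (b i)) * ∑ i ∈ range (b j), q i :=
    sum_congr rfl fun j hj => by rw [Finset.mem_range] at hj; rw [hP j hj.le, hab j hj]
  rw [h.digitCode_eq_sum_add_mul ha n, h.digitCode_eq_sum_add_mul hb n, hS, hP n le_rfl]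
  ring

lemma digitCode_add_le_of_lt (h : InvariantInterval q k c) (ha : ∀ j, a j ≤ k)
    (hb : ∀ j, b j ≤ k) (hab : a 0 < b 0) : digitCode q a + q (a 0) * (1 - c) ≤ digitCode q b := by
  have hfirst : ∀ {a : ℕ → ℕ}, (∀ j, a j ≤ k) →
      digitCode q a = ∑ i ∈ range (a 0), q i + q (a 0) * digitCode q (fun j => a (1 + j)) :=
    fun ha => by simpa using h.digitCode_eq_sum_add_mul ha 1
  have hua := h.digitCode_le (a := fun j => a (1 + j)) fun j => ha _
  have hlb := h.digitCode_nonneg (a := fun j => b (1 + j)) fun j => hb _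
  have hsum : ∑ i ∈ range (a 0 + 1), q i ≤ ∑ i ∈ range (b 0), q i :=
    sum_range_mono_of_nonneg h.weight_nonneg hab (by linarith [hb 0])
  rw [sum_range_succ] at hsum
  rw [hfirst ha, hfirst hb]
  nlinarith [h.weight_nonneg _ (ha 0), h.weight_nonneg _ (hb 0)]

lemma abs_digitCode_sub_le (h : InvariantInterval q k c) (ha : ∀ j, a j ≤ k) (hb : ∀ j, b j ≤ k)
    {n : ℕ} (hab : ∀ i < n, a i = b i) :
    |digitCode q a - digitCode q b| ≤ (∏ i ∈ range n, q (a i)) * c := by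
  have hP : 0 ≤ ∏ i ∈ range n, q (a i) := prod_nonneg fun i _ => h.weight_nonneg _ (ha i)
  rw [h.digitCode_sub_eq_mul ha hb hab, abs_mul, abs_of_nonneg hP]
  refine mul_le_mul_of_nonneg_left (abs_sub_le_iff.2 ⟨?_, ?_⟩) hP <;>
    linarith [h.digitCode_le (a := fun j => a (n + j)) fun j => ha _,
      h.digitCode_le (a := fun j => b (n + j)) fun j => hb _,
      h.digitCode_nonneg (a := fun j => a (n + j)) fun j => ha _,
      h.digitCode_nonneg (a := fun j => b (n + j)) fun j => hb _]

lemma mul_le_abs_digitCode_sub (h : InvariantInterval q k c) (hε : ∀ i ≤ k, ε ≤ q i * (1 - c))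
    (ha : ∀ j, a j ≤ k) (hb : ∀ j, b j ≤ k) {n : ℕ} (hab : ∀ i < n, a i = b i) (hn : a n ≠ b n) :
    (∏ i ∈ range n, q (a i)) * ε ≤ |digitCode q a - digitCode q b| := by
  have hP : 0 ≤ ∏ i ∈ range n, q (a i) := prod_nonneg fun i _ => h.weight_nonneg _ (ha i)
  rw [h.digitCode_sub_eq_mul ha hb hab, abs_mul, abs_of_nonneg hP]
  refine mul_le_mul_of_nonneg_left ?_ hP
  rcases hn.lt_or_gt with hlt | hlt
  · have := h.digitCode_add_le_of_lt (a := fun j => a (n + j)) (b := fun j => b (n + j))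
      (fun j => ha _) (fun j => hb _) (by simpa using hlt)
    rw [abs_sub_comm]
    exact le_abs.2 (.inl (by simp only [add_zero] at this; linarith [hε _ (ha n)]))
  · have := h.digitCode_add_le_of_lt (a := fun j => b (n + j)) (b := fun j => a (n + j))
      (fun j => hb _) (fun j => ha _) (by simpa using hlt)
    exact le_abs.2 (.inl (by simp only [add_zero] at this; linarith [hε _ (hb n)]))

end InvariantInterval

lemma exists_digit {q : ℕ → ℝ} {k : ℕ} (hsum : ∑ i ∈ range (k + 1), q i = 1) {y : ℝ}
    (hy : y ∈ Ico (0 : ℝ) 1) :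
    ∃ i ≤ k, ∑ j ∈ range i, q j ≤ y ∧ y < ∑ j ∈ range i, q j + q i := by
  classical
  have hex : ∃ i, y < ∑ j ∈ range (i + 1), q j := ⟨k, hsum ▸ hy.2⟩
  refine ⟨Nat.find hex, Nat.find_min' hex (hsum ▸ hy.2), ?_, by
    simpa [sum_range_succ] using Nat.find_spec hex⟩
  rcases hfind : Nat.find hex with _ | m
  · simpa using hy.1
  · exact not_lt.1 (Nat.find_min hex (hfind ▸ m.lt_succ_self))

lemma tendsto_prod_range_zero {q : ℕ → ℝ} {k : ℕ} {a : ℕ → ℕ} (hq : ∀ i ≤ k, 0 ≤ q i)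
    (hq1 : ∀ i ≤ k, q i < 1) (ha : ∀ j, a j ≤ k) :
    Tendsto (fun n => ∏ i ∈ range n, q (a i)) atTop (𝓝 0) := by
  obtain ⟨m, hm, hmax⟩ := (range (k + 1)).exists_max_image q ⟨0, by simp⟩
  have hmk : m ≤ k := Nat.lt_succ_iff.1 (mem_range.1 hm)
  refine squeeze_zero (fun n => prod_nonneg fun i _ => hq _ (ha i)) (fun n => ?_)
    (tendsto_pow_atTop_nhds_zero_of_lt_one (hq m hmk) (hq1 m hmk))
  simpa using prod_le_prod (fun i _ => hq _ (ha i)) fun i (_ : i ∈ range n) =>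
    hmax _ (mem_range.2 (Nat.lt_succ_of_le (ha i)))

lemma InvariantInterval.digitCode_eq_of_eq_add_mul {q : ℕ → ℝ} {k : ℕ} {c : ℝ} {a : ℕ → ℕ}
    {y : ℕ → ℝ} (h : InvariantInterval q k c) (hq1 : ∀ i ≤ k, q i < 1) (ha : ∀ j, a j ≤ k)
    (hy : ∀ n, y n ∈ Icc (0 : ℝ) 1)
    (hrec : ∀ n, y n = ∑ i ∈ range (a n), q i + q (a n) * y (n + 1)) : digitCode q a = y 0 := by
  have hpartial : ∀ n, ∑ j ∈ range n, (∏ i ∈ range j, q (a i)) * ∑ i ∈ range (a j), q i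
      = y 0 - (∏ i ∈ range n, q (a i)) * y n := fun n => by
    induction n with
    | zero => simp
    | succ n ih => rw [sum_range_succ, ih, prod_range_succ, hrec n]; ring
  have hP : ∀ n, 0 ≤ ∏ i ∈ range n, q (a i) := fun n =>
    prod_nonneg fun i _ => h.weight_nonneg _ (ha i)
  have hPy : Tendsto (fun n => (∏ i ∈ range n, q (a i)) * y n) atTop (𝓝 0) :=
    squeeze_zero (fun n => mul_nonneg (hP n) (hy n).1)
      (fun n => mul_le_of_le_one_right (hP n) (hy n).2)
      (tendsto_prod_range_zero h.weight_nonneg hq1 ha)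
  refine ((hasSum_iff_tendsto_nat_of_nonneg (h.digitCode_term_nonneg ha) _).2 ?_).tsum_eq
  simpa [hpartial] using (tendsto_const_nhds (x := y 0)).sub hPy

lemma Ico_subset_image_digitCode {q : ℕ → ℝ} {k : ℕ} (hq : ∀ i ≤ k, 0 < q i)
    (hq1 : ∀ i ≤ k, q i < 1) (hsum : ∑ i ∈ range (k + 1), q i = 1) :
    Ico (0 : ℝ) 1 ⊆ digitCode q '' {a | ∀ j, a j ≤ k} := by
  choose! d hdk hdl hdr using fun y (hy : y ∈ Ico (0 : ℝ) 1) => exists_digit hsum hy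
  set T : ℝ → ℝ := fun y => (y - ∑ i ∈ range (d y), q i) / q (d y)
  have hT : MapsTo T (Ico (0 : ℝ) 1) (Ico 0 1) := fun y hy => by
    have := hq _ (hdk y hy)
    exact ⟨div_nonneg (by linarith [hdl y hy]) this.le,
      (div_lt_one this).2 (by linarith [hdr y hy])⟩
  intro x hx
  have horbit : ∀ n, T^[n] x ∈ Ico (0 : ℝ) 1 := fun n => hT.iterate n hx
  refine ⟨fun n => d (T^[n] x), fun n => hdk _ (horbit n), ?_⟩
  have hI := InvariantInterval.of_sum_le_one (fun i hi => (hq i hi).le) hsum.le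
  refine hI.digitCode_eq_of_eq_add_mul hq1 (fun n => hdk _ (horbit n))
    (fun n => Ico_subset_Icc_self (horbit n)) fun n => ?_
  have hq0 := (hq _ (hdk _ (horbit n))).ne'
  rw [Function.iterate_succ_apply', mul_div_cancel₀ _ hq0, add_sub_cancel]

lemma dimH_image_le_div_of_dist_le {X Y Z : Type*} [MetricSpace Y] [MetricSpace Z]
    {f : X → Y} {g : X → Z} {S : Set X} {C s : ℝ≥0} (hs : 0 < s)
    (h : ∀ a ∈ S, ∀ b ∈ S, dist (g a) (g b) ≤ C * dist (f a) (f b) ^ (s : ℝ)) :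
    dimH (g '' S) ≤ dimH (f '' S) / s := by
  obtain rfl | ⟨x₀, -⟩ := S.eq_empty_or_nonempty
  · simp
  have : Nonempty X := ⟨x₀⟩
  set φ := g ∘ Function.invFunOn f S
  have hφ : ∀ a ∈ S, φ (f a) = g a := fun a ha => by
    have := h _ (Function.invFunOn_mem (f := f) ⟨a, ha, rfl⟩) a ha
    rw [Function.invFunOn_eq (f := f) ⟨a, ha, rfl⟩, dist_self, Real.zero_rpow (by positivity),
      mul_zero] at this
    exact dist_le_zero.1 this
  have hH : HolderOnWith C s φ (f '' S) := by
    rintro _ ⟨a, ha, rfl⟩ _ ⟨b, hb, rfl⟩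
    rw [hφ a ha, hφ b hb, edist_dist, edist_dist,
      ENNReal.ofReal_rpow_of_nonneg dist_nonneg s.coe_nonneg, ← ENNReal.ofReal_coe_nnreal,
      ← ENNReal.ofReal_mul C.coe_nonneg]
    exact ENNReal.ofReal_le_ofReal (h a ha b hb)
  calc dimH (g '' S) = dimH (φ '' (f '' S)) := by
        rw [Set.image_image]; exact congrArg dimH (image_congr fun a ha => (hφ a ha).symm)
    _ ≤ dimH (f '' S) / s := hH.dimH_image_le hs

lemma dimH_image_digitCode_le_div {p q : ℕ → ℝ} {k : ℕ} {s : ℝ≥0} (hs : 0 < s)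
    (hp : ∀ i ≤ k, 0 < p i) (hpsum : ∑ i ∈ range (k + 1), p i < 1)
    (hq : ∀ i ≤ k, 0 ≤ q i) (hqsum : ∑ i ∈ range (k + 1), q i ≤ 1)
    (hqp : ∀ i ≤ k, q i ≤ p i ^ (s : ℝ)) :
    dimH (digitCode q '' {a | ∀ j, a j ≤ k}) ≤ dimH (digitCode p '' {a | ∀ j, a j ≤ k}) / s := by
  obtain ⟨c, hc1, hpI⟩ := InvariantInterval.exists_lt_one (fun i hi => (hp i hi).le) hpsum
  have hqI := InvariantInterval.of_sum_le_one hq hqsum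
  obtain ⟨m, hm, hmin⟩ := (range (k + 1)).exists_min_image p ⟨0, by simp⟩
  have hmk : m ≤ k := Nat.lt_succ_iff.1 (mem_range.1 hm)
  set ε := p m * (1 - c)
  have hε : 0 < ε := mul_pos (hp m hmk) (by linarith)
  have hεle : ∀ i ≤ k, ε ≤ p i * (1 - c) := fun i hi =>
    mul_le_mul_of_nonneg_right (hmin i (mem_range.2 (by omega))) (by linarith)
  refine dimH_image_le_div_of_dist_le (C := (ε ^ (-(s : ℝ))).toNNReal) hs
    fun a ha b hb => ?_
  rcases eq_or_ne a b with rfl | hab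
  · simp only [dist_self]; positivity
  set n := PiNat.firstDiff a b
  have hagree : ∀ i < n, a i = b i := fun i hi => PiNat.apply_eq_of_lt_firstDiff hi
  have hP : 0 ≤ ∏ i ∈ range n, p (a i) := prod_nonneg fun i _ => (hp _ (ha i)).le
  have hlow := hpI.mul_le_abs_digitCode_sub hεle ha hb hagree (PiNat.apply_firstDiff_ne hab)
  rw [Real.dist_eq, Real.dist_eq, Real.coe_toNNReal _ (by positivity)]
  calc |digitCode q a - digitCode q b| ≤ (∏ i ∈ range n, q (a i)) * 1 :=
        hqI.abs_digitCode_sub_le ha hb hagree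
    _ ≤ (∏ i ∈ range n, p (a i)) ^ (s : ℝ) := by
        rw [mul_one, ← Real.finsetProd_rpow _ _ fun i _ => (hp _ (ha i)).le]
        exact prod_le_prod (fun i _ => hq _ (ha i)) fun i _ => hqp _ (ha i)
    _ ≤ (|digitCode p a - digitCode p b| / ε) ^ (s : ℝ) :=
        Real.rpow_le_rpow hP ((le_div_iff₀ hε).2 hlow) s.coe_nonneg
    _ = ε ^ (-(s : ℝ)) * |digitCode p a - digitCode p b| ^ (s : ℝ) := by
        rw [Real.div_rpow (abs_nonneg _) hε.le, Real.rpow_neg hε.le]; ring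

lemma one_le_dimH_image_digitCode {q : ℕ → ℝ} {k : ℕ} (hq : ∀ i ≤ k, 0 < q i)
    (hq1 : ∀ i ≤ k, q i < 1) (hsum : ∑ i ∈ range (k + 1), q i = 1) :
    1 ≤ dimH (digitCode q '' {a | ∀ j, a j ≤ k}) :=
  calc (1 : ℝ≥0∞) = dimH (Ico (0 : ℝ) 1) := by
        rw [Real.dimH_of_nonempty_interior (by simp), Module.finrank_self, Nat.cast_one]
    _ ≤ _ := dimH_mono (Ico_subset_image_digitCode hq hq1 hsum)

lemma le_dimH_image_digitCode {p : ℕ → ℝ} {k : ℕ} {s : ℝ≥0} (hs : 0 < s) (hk : 1 ≤ k)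
    (hp : ∀ i ≤ k, 0 < p i) (hpsum : ∑ i ∈ range (k + 1), p i < 1)
    (hS : 1 ≤ ∑ i ∈ range (k + 1), p i ^ (s : ℝ)) :
    (s : ℝ≥0∞) ≤ dimH (digitCode p '' {a | ∀ j, a j ≤ k}) := by
  set S := ∑ i ∈ range (k + 1), p i ^ (s : ℝ)
  have hS0 : 0 < S := one_pos.trans_le hS
  have hps : ∀ i ≤ k, 0 < p i ^ (s : ℝ) := fun i hi => Real.rpow_pos_of_pos (hp i hi) _
  set q : ℕ → ℝ := fun i => p i ^ (s : ℝ) / S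
  have hq : ∀ i ≤ k, 0 < q i := fun i hi => div_pos (hps i hi) hS0
  have hqsum : ∑ i ∈ range (k + 1), q i = 1 := by rw [← sum_div, div_self hS0.ne']
  have hq1 : ∀ i ≤ k, q i < 1 := fun i hi => by
    obtain ⟨j, hjk, hji⟩ : ∃ j ≤ k, j ≠ i :=
      ⟨if i = 0 then 1 else 0, by split_ifs <;> omega, by split_ifs <;> omega⟩
    rw [div_lt_one hS0]
    exact single_lt_sum hji (mem_range.2 (by omega)) (mem_range.2 (by omega)) (hps j hjk)
      fun l hl _ => (hps l (Nat.lt_succ_iff.1 (mem_range.1 hl))).le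
  have hqp : ∀ i ≤ k, q i ≤ p i ^ (s : ℝ) := fun i hi => div_le_self (hps i hi).le hS
  have h := (one_le_dimH_image_digitCode hq hq1 hqsum).trans
    (dimH_image_digitCode_le_div hs hp hpsum (fun i hi => (hq i hi).le) hqsum.le hqp)
  rwa [ENNReal.le_div_iff_mul_le (.inl (by exact_mod_cast hs.ne')) (.inl ENNReal.coe_ne_top),
    one_mul] at h

lemma exists_one_le_sum_rpow {p : ℕ → ℝ} (hp : ∀ i, p i ∈ Ioo (0 : ℝ) 1) (hsum : HasSum p 1)
    {s : ℝ} (hs : s < 1) : ∃ k, 1 ≤ k ∧ 1 ≤ ∑ i ∈ range (k + 1), p i ^ s := by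
  have hle : ∀ i, p i ≤ p i ^ s := fun i => by
    simpa using Real.rpow_le_rpow_of_exponent_ge (hp i).1 (hp i).2.le hs.le
  have hδ : p 0 < p 0 ^ s := by
    simpa using Real.rpow_lt_rpow_of_exponent_gt (hp 0).1 (hp 0).2 hs
  obtain ⟨k, hk, hlt⟩ : ∃ k, 1 ≤ k ∧ 1 - (p 0 ^ s - p 0) < ∑ i ∈ range (k + 1), p i :=
    ((eventually_ge_atTop 1).and (((tendsto_add_atTop_iff_nat 1).2 hsum.tendsto_sum_nat).eventually
      (eventually_gt_nhds (by linarith)))).exists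
  refine ⟨k, hk, ?_⟩
  rw [sum_range_succ'] at hlt ⊢
  linarith [sum_le_sum fun i (_ : i ∈ range k) => hle (i + 1)]

lemma sum_range_lt_of_hasSum {p : ℕ → ℝ} {t : ℝ} (hp : ∀ i, 0 < p i) (hsum : HasSum p t)
    (n : ℕ) : ∑ i ∈ range n, p i < t :=
  (sum_range_succ p n ▸ lt_add_of_pos_right _ (hp n)).trans_le
    (sum_le_hasSum _ (fun i _ => (hp i).le) hsum)

/-- The set of numbers whose digit sequence is bounded has full
Hausdorff dimension 1. -/
theorem dimH_bounded_sequences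
    (p : ℕ → ℝ) (hp : ∀ i, p i ∈ Set.Ioo (0:ℝ) 1) (hsum : HasSum p 1)
    (phat : ℕ → ℝ) (hphat : ∀ n, phat n = ∑ i ∈ Finset.range n, p i)
    (π : (ℕ → ℕ) → ℝ)
    (hπ : ∀ a : ℕ → ℕ, π a = phat (a 0) +
      ∑' j : ℕ, (∏ i ∈ Finset.range (j + 1), p (a i)) * phat (a (j + 1))) :
    dimH (π '' {a : ℕ → ℕ | ∃ k, ∀ j, a j ≤ k}) = 1 := by
  obtain rfl : phat = fun n => ∑ i ∈ range n, p i := funext hphat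
  have hpos : ∀ i, 0 < p i := fun i => (hp i).1
  have hπB : π '' {a | ∃ k, ∀ j, a j ≤ k} = digitCode p '' {a | ∃ k, ∀ j, a j ≤ k} := by
    refine image_congr fun a ⟨k, ha⟩ => ?_
    have hI := InvariantInterval.of_sum_le_one (fun i _ => (hpos i).le)
      (sum_range_lt_of_hasSum hpos hsum (k + 1)).le
    rw [hπ, digitCode_eq_add_tsum (hI.summable_digitCode_term ha)]
  refine le_antisymm ((dimH_mono (subset_univ _)).trans_eq Real.dimH_univ)
    (ENNReal.le_of_forall_nnreal_lt fun s hs => ?_)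
  rcases eq_zero_or_pos s with rfl | hs0
  · simp
  obtain ⟨k, hk, hS⟩ := exists_one_le_sum_rpow hp hsum (s := s)
    (by exact_mod_cast ENNReal.coe_lt_one_iff.1 hs)
  calc (s : ℝ≥0∞) ≤ dimH (digitCode p '' {a | ∀ j, a j ≤ k}) :=
        le_dimH_image_digitCode hs0 hk (fun i _ => hpos i)
          (sum_range_lt_of_hasSum hpos hsum _) hS
    _ ≤ dimH (π '' {a | ∃ k, ∀ j, a j ≤ k}) := hπB ▸ dimH_mono (image_mono fun a ha => ⟨k, ha⟩)
end

section
/- Fix n ≥ 2. For p ∈ (0,1), let d(p) ∈ (0,1) be the unique solution of (1−p^{d n})(1−p)^d/(1−p^d) = 1. Then d(p) → 1 as p → 0⁺ and d(p) → 0 as p → 1⁻; consequently, by continuity, d attains every value in (0,1) as p ranges over (0,1). -/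
/-!
Write `S_n(p, e) = ∑_{i<n} ((1-p) p^i)^e`, which for `p ∈ (0,1)` equals the left-hand side of the
Moran equation, so `d(p)` is characterised by `S_n(p, d(p)) = 1`. For fixed `p` the map `e ↦ S_n(p, e)`
is strictly decreasing, hence `d(p)` lies above (below) every `e` with `S_n(p, e) > 1` (`< 1`).
Fix `e ∈ (0,1)`. As `p → 1⁻` every term tends to `0`, so `S_n(p, e) < 1` eventually. As `p → 0⁺`,
the first two terms give `S_n(p, e) ≥ (1-p)(1+p^e)`, which exceeds `1` once `p^{1-e} < 1/2`.
This yields both limits, and the intermediate value theorem in `p` produces a `p` with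
`S_n(p, e) = 1`, i.e. `d(p) = e`.
-/

open Set Real Filter Topology Finset

section OrderLimits

variable {α β : Type*} [TopologicalSpace β] [LinearOrder β] [OrderTopology β] [DenselyOrdered β]
  {l : Filter α} {f : α → β} {a b : β}

lemma tendsto_nhds_of_eventually_le_of_forall_Ioo (hab : a < b) (hle : ∀ᶠ x in l, f x ≤ b)
    (hlt : ∀ y ∈ Ioo a b, ∀ᶠ x in l, y < f x) : Tendsto f l (𝓝 b) := by
  refine tendsto_order.2 ⟨fun c hc => ?_, fun c hc => hle.mono fun x hx => hx.trans_lt hc⟩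
  obtain ⟨y, hcy, hyb⟩ := exists_between (max_lt hc hab)
  exact (hlt y ⟨(le_max_right c a).trans_lt hcy, hyb⟩).mono fun x hx =>
    (le_max_left c a).trans_lt (hcy.trans hx)

lemma tendsto_nhds_of_eventually_ge_of_forall_Ioo (hab : a < b) (hge : ∀ᶠ x in l, a ≤ f x)
    (hlt : ∀ y ∈ Ioo a b, ∀ᶠ x in l, f x < y) : Tendsto f l (𝓝 a) := by
  refine tendsto_order.2 ⟨fun c hc => hge.mono fun x hx => hc.trans_le hx, fun c hc => ?_⟩
  obtain ⟨y, hay, hyc⟩ := exists_between (lt_min hc hab)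
  exact (hlt y ⟨hay, hyc.trans_le (min_le_right c b)⟩).mono fun x hx =>
    (hx.trans hyc).trans_le (min_le_left c b)

end OrderLimits

noncomputable def moranSum (n : ℕ) (p e : ℝ) : ℝ :=
  ∑ i ∈ range n, ((1 - p) * p ^ i) ^ e

namespace moranSum

variable {n : ℕ} {p e : ℝ}

lemma eq_closedForm (hp0 : 0 ≤ p) (hp1 : p < 1) (he : 0 < e) :
    (1 - p ^ (e * n)) * (1 - p) ^ e / (1 - p ^ e) = moranSum n p e := by
  have hpe : p ^ e < 1 := rpow_lt_one hp0 hp1 he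
  have hterm : ∀ i : ℕ, ((1 - p) * p ^ i) ^ e = (1 - p) ^ e * (p ^ e) ^ i := fun i => by
    rw [mul_rpow (by linarith) (pow_nonneg hp0 i), ← rpow_natCast, ← rpow_natCast,
      ← rpow_mul hp0, ← rpow_mul hp0, mul_comm (i : ℝ)]
  rw [div_eq_iff (by linarith), moranSum, Finset.sum_congr rfl fun i _ => hterm i,
    ← Finset.mul_sum, mul_assoc, geom_sum_mul_neg, rpow_mul hp0, rpow_natCast]
  ring

lemma strictAnti (hn : n ≠ 0) (hp0 : 0 < p) (hp1 : p < 1) : StrictAnti (moranSum n p) :=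
  fun _ _ hab => Finset.sum_lt_sum_of_nonempty (nonempty_range_iff.2 hn) fun i _ =>
    rpow_lt_rpow_of_exponent_gt (mul_pos (by linarith) (pow_pos hp0 i))
      (mul_lt_one_of_nonneg_of_lt_one_left (by linarith) (by linarith)
        (pow_le_one₀ hp0.le hp1.le)) hab

lemma continuous (n : ℕ) (he : 0 ≤ e) : Continuous fun p => moranSum n p e :=
  continuous_finsetSum _ fun i _ =>
    ((continuous_const.sub continuous_id).mul (continuous_pow i)).rpow_const fun _ => Or.inr he

lemma one_sub_mul_one_add_rpow_le (hn : 2 ≤ n) (hp0 : 0 ≤ p) (hp1 : p ≤ 1) (he1 : e ≤ 1) :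
    (1 - p) * (1 + p ^ e) ≤ moranSum n p e := by
  have hq : 0 ≤ 1 - p := by linarith
  have hq_le : 1 - p ≤ (1 - p) ^ e := self_le_rpow_of_le_one hq (by linarith) he1
  have htwo : ∑ i ∈ range 2, ((1 - p) * p ^ i) ^ e ≤ moranSum n p e :=
    Finset.sum_le_sum_of_subset_of_nonneg (range_subset_range.2 hn) fun i _ _ =>
      rpow_nonneg (mul_nonneg hq (pow_nonneg hp0 i)) e
  rw [sum_range_succ, sum_range_one, pow_zero, pow_one, mul_one, mul_rpow hq hp0] at htwo
  nlinarith [rpow_nonneg hp0 e]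

lemma eventually_one_lt (hn : 2 ≤ n) (he1 : e < 1) :
    ∀ᶠ p in 𝓝[>] 0, 1 < moranSum n p e := by
  have hpow : Tendsto (fun p : ℝ => p ^ (1 - e)) (𝓝[>] 0) (𝓝 0) := by
    simpa [zero_rpow (by linarith : 1 - e ≠ 0)] using
      ((continuous_rpow_const (by linarith : 0 ≤ 1 - e)).tendsto 0).mono_left nhdsWithin_le_nhds
  filter_upwards [hpow.eventually_lt_const (by norm_num : (0 : ℝ) < 1 / 2),
    Ioo_mem_nhdsGT (by norm_num : (0 : ℝ) < 1 / 2)] with p hsmall ⟨hp0, hp_half⟩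
  have hpe : 0 < p ^ e := rpow_pos_of_pos hp0 e
  have hp_lt : p < p ^ e * (1 - p) := calc
    p = p ^ e * p ^ (1 - e) := by rw [← rpow_add hp0, add_sub_cancel, rpow_one]
    _ < p ^ e * (1 / 2) := mul_lt_mul_of_pos_left hsmall hpe
    _ ≤ p ^ e * (1 - p) := mul_le_mul_of_nonneg_left (by linarith) hpe.le
  have := one_sub_mul_one_add_rpow_le hn hp0.le (by linarith) he1.le
  nlinarith

lemma eventually_lt_one (n : ℕ) (he : 0 < e) : ∀ᶠ p in 𝓝[<] 1, moranSum n p e < 1 := by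
  have hzero : moranSum n 1 e = 0 := by simp [moranSum, zero_rpow he.ne']
  have hlim := (continuous n he.le).tendsto 1
  rw [hzero] at hlim
  exact eventually_nhdsWithin_of_eventually_nhds (hlim.eventually_lt_const one_pos)

lemma exists_eq_one (hn : 2 ≤ n) (he0 : 0 < e) (he1 : e < 1) :
    ∃ p ∈ Ioo (0 : ℝ) 1, moranSum n p e = 1 := by
  obtain ⟨a, ha_gt, ha⟩ :=
    ((eventually_one_lt hn he1).and (Ioo_mem_nhdsGT one_pos)).exists
  obtain ⟨b, hb_lt, hb⟩ := ((eventually_lt_one n he0).and (Ioo_mem_nhdsLT ha.2)).exists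
  obtain ⟨p, hp, hp_eq⟩ := intermediate_value_Icc' hb.1.le (continuous n he0.le).continuousOn
    ⟨hb_lt.le, ha_gt.le⟩
  exact ⟨p, ⟨ha.1.trans_le hp.1, hp.2.trans_lt hb.2⟩, hp_eq⟩

end moranSum

/-- For fixed `n ≥ 2`, if `d : (0,1) → (0,1)` solves
`(1-p^{dn})(1-p)^d/(1-p^d) = 1`, then `d(p) → 1` as `p → 0⁺`, `d(p) → 0` as `p → 1⁻`,
and `d` attains every value in `(0,1)`. -/
theorem geometric_dimension_limits (n : ℕ) (hn : 2 ≤ n) (d : ℝ → ℝ)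
    (hd : ∀ p ∈ Set.Ioo (0:ℝ) 1, d p ∈ Set.Ioo (0:ℝ) 1 ∧
      (1 - p ^ (d p * n)) * (1 - p) ^ (d p) / (1 - p ^ (d p)) = 1) :
    Tendsto d (𝓝[>] (0:ℝ)) (𝓝 1) ∧
    Tendsto d (𝓝[<] (1:ℝ)) (𝓝 0) ∧
    ∀ y ∈ Set.Ioo (0:ℝ) 1, ∃ p ∈ Set.Ioo (0:ℝ) 1, d p = y := by
  have hn0 : n ≠ 0 := by omega
  have hsum : ∀ p ∈ Ioo (0 : ℝ) 1, moranSum n p (d p) = 1 := fun p hp => by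
    rw [← (hd p hp).2, moranSum.eq_closedForm hp.1.le hp.2 (hd p hp).1.1]
  have hmem₀ : ∀ᶠ p in 𝓝[>] (0 : ℝ), p ∈ Ioo (0 : ℝ) 1 := Ioo_mem_nhdsGT one_pos
  have hmem₁ : ∀ᶠ p in 𝓝[<] (1 : ℝ), p ∈ Ioo (0 : ℝ) 1 := Ioo_mem_nhdsLT one_pos
  refine ⟨?_, ?_, fun y hy => ?_⟩
  · refine tendsto_nhds_of_eventually_le_of_forall_Ioo one_pos
      (hmem₀.mono fun p hp => (hd p hp).1.2.le) fun y hy => ?_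
    filter_upwards [moranSum.eventually_one_lt hn hy.2, hmem₀] with p hy_lt hp
    exact (moranSum.strictAnti hn0 hp.1 hp.2).lt_iff_gt.1 (hsum p hp ▸ hy_lt)
  · refine tendsto_nhds_of_eventually_ge_of_forall_Ioo one_pos
      (hmem₁.mono fun p hp => (hd p hp).1.1.le) fun y hy => ?_
    filter_upwards [moranSum.eventually_lt_one n hy.1, hmem₁] with p hy_gt hp
    exact (moranSum.strictAnti hn0 hp.1 hp.2).lt_iff_gt.1 (hsum p hp ▸ hy_gt)
  · obtain ⟨p, hp, hp_eq⟩ := moranSum.exists_eq_one hn hy.1 hy.2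
    exact ⟨p, hp, (moranSum.strictAnti hn0 hp.1 hp.2).injective ((hsum p hp).trans hp_eq.symm)⟩
end

section
/- Fix n ≥ 2. For λ ∈ (0,∞), let d(λ) be the unique solution of ∑_{i=1}^n e^{−λ d} λ^{d(i−1)} / ((i−1)!)^d = 1. Then d(λ) → 1 as λ → 0⁺ and d(λ) → 0 as λ → ∞. -/
/-!
For weights `0 < p i ≤ 1` the Moran sum `e ↦ ∑ i, p i ^ e` is antitone, so the dimension `d` lies
below every exponent at which the sum is `< 1` and above every exponent at which it is `> 1`.
For the Poisson weights the sum at `e = 1` is a proper partial sum of the distribution, hence `< 1`.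
As `λ → ∞` every weight tends to `0`, so the sum at any fixed `e > 0` tends to `0`. As `λ → 0⁺`,
the first two weights alone give `e^{-λ e} (1 + λ^e) ≥ (1 - λ) (1 + λ^e) > 1` for fixed `e < 1`,
because `λ^e ≫ λ`.
-/

open Real Filter Topology ProbabilityTheory MeasureTheory
open scoped NNReal Nat

section MoranSum

variable {ι : Type*} {s : Finset ι} {p : ι → ℝ} {a b : ℝ}

lemma Finset.sum_rpow_le_sum_rpow_of_le (hp₀ : ∀ i ∈ s, 0 < p i) (hp₁ : ∀ i ∈ s, p i ≤ 1)
    (hab : a ≤ b) : ∑ i ∈ s, p i ^ b ≤ ∑ i ∈ s, p i ^ a :=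
  Finset.sum_le_sum fun i hi => rpow_le_rpow_of_exponent_ge (hp₀ i hi) (hp₁ i hi) hab

lemma lt_of_sum_rpow_eq_one_of_sum_rpow_lt_one (hp₀ : ∀ i ∈ s, 0 < p i)
    (hp₁ : ∀ i ∈ s, p i ≤ 1) (hb : ∑ i ∈ s, p i ^ b = 1) (ha : ∑ i ∈ s, p i ^ a < 1) : b < a :=
  lt_of_not_ge fun hab => (Finset.sum_rpow_le_sum_rpow_of_le hp₀ hp₁ hab).not_gt (hb ▸ ha)

lemma lt_of_sum_rpow_eq_one_of_one_lt_sum_rpow (hp₀ : ∀ i ∈ s, 0 < p i)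
    (hp₁ : ∀ i ∈ s, p i ≤ 1) (hb : ∑ i ∈ s, p i ^ b = 1) (ha : 1 < ∑ i ∈ s, p i ^ a) : a < b :=
  lt_of_not_ge fun hba => (Finset.sum_rpow_le_sum_rpow_of_le hp₀ hp₁ hba).not_gt (hb ▸ ha)

end MoranSum

section PoissonWeights

lemma poissonMeasure_real_singleton_rpow {l : ℝ} (hl : 0 ≤ l) (i : ℕ) (e : ℝ) :
    Po(l.toNNReal).real {i} ^ e = exp (-(l * e)) * l ^ (e * i) / (i ! : ℝ) ^ e := by
  rw [poissonMeasure_real_singleton, coe_toNNReal l hl, div_rpow (by positivity) (by positivity),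
    mul_rpow (exp_pos _).le (by positivity), ← exp_mul, ← rpow_natCast l i, ← rpow_mul hl,
    neg_mul, mul_comm (i : ℝ) e]

lemma sum_range_poissonMeasure_real_lt_one {r : ℝ≥0} (hr : 0 < r) (n : ℕ) :
    ∑ i ∈ Finset.range n, Po(r).real {i} < 1 :=
  calc ∑ i ∈ Finset.range n, Po(r).real {i}
      < ∑ i ∈ Finset.range (n + 1), Po(r).real {i} := by
        rw [Finset.sum_range_succ]
        exact lt_add_of_pos_right _ (poissonMeasure_real_singleton_pos n hr)
    _ ≤ 1 := by
        rw [sum_measureReal_singleton]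
        exact measureReal_le_one

lemma tendsto_poissonMeasure_real_singleton_atTop (i : ℕ) :
    Tendsto (fun l : ℝ => Po(l.toNNReal).real {i}) atTop (𝓝 0) := by
  have hlim := (tendsto_pow_mul_exp_neg_atTop_nhds_zero i).div_const (i ! : ℝ)
  rw [zero_div] at hlim
  refine hlim.congr' ?_
  filter_upwards [eventually_ge_atTop 0] with l hl
  rw [poissonMeasure_real_singleton, coe_toNNReal l hl, mul_comm]

lemma eventually_sum_rpow_poissonMeasure_lt_one (n : ℕ) {a : ℝ} (ha : 0 < a) :
    ∀ᶠ l : ℝ in atTop, ∑ i ∈ Finset.range n, Po(l.toNNReal).real {i} ^ a < 1 := by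
  have hlim : Tendsto (fun l : ℝ => ∑ i ∈ Finset.range n, Po(l.toNNReal).real {i} ^ a) atTop
      (𝓝 0) := by
    simpa [zero_rpow ha.ne'] using tendsto_finsetSum (Finset.range n) fun i _ =>
      (tendsto_poissonMeasure_real_singleton_atTop i).rpow_const (Or.inr ha.le)
  exact hlim.eventually_lt_const one_pos

lemma one_lt_exp_neg_mul_mul_one_add_rpow {l a : ℝ} (hl₀ : 0 < l) (ha₀ : 0 ≤ a) (ha₁ : a ≤ 1)
    (hla : 2 * l < l ^ a) : 1 < exp (-(l * a)) * (1 + l ^ a) := by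
  have hl₁ : l ≤ 1 := by
    by_contra! h
    linarith [rpow_le_self_of_one_le h.le ha₁]
  have hexp : 1 - l ≤ exp (-(l * a)) := by
    have : -l ≤ -(l * a) := by nlinarith
    linarith [add_one_le_exp (-l), exp_le_exp.2 this]
  have hpow : l ^ a ≤ 1 := rpow_le_one hl₀.le hl₁ ha₀
  calc 1 < (1 - l) * (1 + l ^ a) := by nlinarith
    _ ≤ exp (-(l * a)) * (1 + l ^ a) := by gcongr

lemma eventually_one_lt_sum_rpow_poissonMeasure {n : ℕ} (hn : 2 ≤ n) {a : ℝ} (ha₀ : 0 ≤ a)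
    (ha₁ : a < 1) : ∀ᶠ l : ℝ in 𝓝[>] 0, 1 < ∑ i ∈ Finset.range n, Po(l.toNNReal).real {i} ^ a := by
  have hlarge : ∀ᶠ l : ℝ in 𝓝[>] 0, 2 < l ^ (a - 1) :=
    (tendsto_rpow_neg_nhdsGT_zero (by linarith)).eventually_gt_atTop 2
  filter_upwards [self_mem_nhdsWithin, hlarge] with l (hl : 0 < l) hla
  have htwo : exp (-(l * a)) * (1 + l ^ a) = ∑ i ∈ Finset.range 2, Po(l.toNNReal).real {i} ^ a := by
    simp only [Finset.sum_range_succ, Finset.range_one, Finset.sum_singleton,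
      poissonMeasure_real_singleton_rpow hl.le, Nat.factorial_zero, Nat.factorial_one,
      Nat.cast_zero, Nat.cast_one, mul_zero, mul_one, rpow_zero, one_rpow, div_one]
    ring
  calc 1 < exp (-(l * a)) * (1 + l ^ a) := by
        refine one_lt_exp_neg_mul_mul_one_add_rpow hl ha₀ ha₁.le ?_
        calc 2 * l < l ^ (a - 1) * l := by gcongr
          _ = l ^ a := by rw [rpow_sub_one hl.ne', div_mul_cancel₀ _ hl.ne']
    _ ≤ ∑ i ∈ Finset.range n, Po(l.toNNReal).real {i} ^ a := by
        rw [htwo]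
        exact Finset.sum_le_sum_of_subset_of_nonneg (Finset.range_subset_range.2 hn)
          fun i _ _ => by positivity

end PoissonWeights

theorem poisson_dimension_limits_general (n : ℕ) (hn : 2 ≤ n) (d : ℝ → ℝ)
    (hd : ∀ l : ℝ, 0 < l → 0 < d l ∧
      ∑ i ∈ Finset.range n,
        Real.exp (-(l * d l)) * l ^ (d l * i) / ((Nat.factorial i : ℝ)) ^ (d l) = 1) :
    Tendsto d (𝓝[>] (0:ℝ)) (𝓝 1) ∧ Tendsto d atTop (𝓝 0) := by
  have hmoran (l : ℝ) (hl : 0 < l) :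
      ∑ i ∈ Finset.range n, Po(l.toNNReal).real {i} ^ d l = 1 := by
    simpa only [poissonMeasure_real_singleton_rpow hl.le] using (hd l hl).2
  have hp₀ (l : ℝ) (hl : 0 < l) : ∀ i ∈ Finset.range n, 0 < Po(l.toNNReal).real {i} :=
    fun i _ => poissonMeasure_real_singleton_pos i (toNNReal_pos.2 hl)
  have hp₁ (l : ℝ) : ∀ i ∈ Finset.range n, Po(l.toNNReal).real {i} ≤ 1 :=
    fun _ _ => measureReal_le_one
  refine ⟨tendsto_order.2 ⟨fun a ha => ?_, fun b hb => ?_⟩,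
    tendsto_order.2 ⟨fun a ha => ?_, fun b hb => ?_⟩⟩
  · filter_upwards [self_mem_nhdsWithin, eventually_one_lt_sum_rpow_poissonMeasure hn
      (le_max_right a 0) (max_lt ha one_pos)] with l (hl : 0 < l) hsum
    exact (le_max_left a 0).trans_lt
      (lt_of_sum_rpow_eq_one_of_one_lt_sum_rpow (hp₀ l hl) (hp₁ l) (hmoran l hl) hsum)
  · filter_upwards [self_mem_nhdsWithin] with l (hl : 0 < l)
    refine (lt_of_sum_rpow_eq_one_of_sum_rpow_lt_one (a := 1) (hp₀ l hl) (hp₁ l) (hmoran l hl)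
      ?_).trans hb
    simpa only [rpow_one] using sum_range_poissonMeasure_real_lt_one (toNNReal_pos.2 hl) n
  · filter_upwards [eventually_gt_atTop 0] with l hl
    exact ha.trans (hd l hl).1
  · filter_upwards [eventually_gt_atTop 0, eventually_sum_rpow_poissonMeasure_lt_one n hb]
      with l hl hsum
    exact lt_of_sum_rpow_eq_one_of_sum_rpow_lt_one (hp₀ l hl) (hp₁ l) (hmoran l hl) hsum

/-- For fixed `n ≥ 2`, if `d(λ)` is the unique positive solution of the
Moran equation `∑_{i=1}^n (e^{-λ} λ^{i-1}/(i-1)!)^d = 1` for the Poisson distribution,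
then `d(λ) → 1` as `λ → 0⁺` and `d(λ) → 0` as `λ → ∞`. -/
theorem poisson_dimension_limits (n : ℕ) (hn : 2 ≤ n) (d : ℝ → ℝ)
    (hd : ∀ l : ℝ, 0 < l → 0 < d l ∧
      ∑ i ∈ Finset.range n,
        Real.exp (-(l * d l)) * l ^ (d l * i) / ((Nat.factorial i : ℝ)) ^ (d l) = 1)
    (huniq : ∀ l : ℝ, 0 < l → ∀ e : ℝ, 0 < e →
      ∑ i ∈ Finset.range n,
        Real.exp (-(l * e)) * l ^ (e * i) / ((Nat.factorial i : ℝ)) ^ e = 1 → e = d l) :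
    Tendsto d (𝓝[>] (0:ℝ)) (𝓝 1) ∧ Tendsto d atTop (𝓝 0) :=
  poisson_dimension_limits_general n hn d hd
end

section
/- Fix n ≥ 2. For s > 1, let d(s) be the unique solution of ζ(s)^{−d} ∑_{i=1}^n i^{−sd} = 1. Then d(s) → 1 as s → ∞, and for every fixed d > 0, ζ(s)^{−d} ∑_{i=1}^n i^{−sd} → 0 as s → 1⁺ (so d(s) → 0 as s → 1⁺). -/
/-!
Write `Z(s) = ∑_{k ≥ 1} k^{-s}`. If `d ≥ 1`, then
`∑_{i ≤ n} i^{-sd} ≤ ∑_{i ≤ n} i^{-s} < Z(s) ≤ Z(s)^d`, so a solution satisfies `d(s) ≤ 1`.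
Conversely `1 + 2^{-sd} ≤ ∑_{i ≤ n} i^{-sd} = Z(s)^d ≤ Z(s)`, and comparing the tail with
`∑ 1/(k(k+1))` gives `Z(s) ≤ 1 + 2^{2-s}`; hence `s d(s) ≥ s - 2`.
As `s → 1⁺`, `Z(s)` dominates every partial sum of the harmonic series, so `Z(s)^{-c} → 0`
while the finite sum stays at most `n`.
-/

open Filter Topology

open Finset in
theorem tendsto_tsum_atTop_of_tendsto_sum_range {X : Type*} [TopologicalSpace X]
    {f : ℕ → X → ℝ} {x₀ : X} {l : Filter X} (hl : l ≤ 𝓝 x₀)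
    (hcont : ∀ k, ContinuousAt (f k) x₀) (hnonneg : ∀ k x, 0 ≤ f k x)
    (hsum : ∀ᶠ x in l, Summable fun k => f k x)
    (hdiv : Tendsto (fun N => ∑ k ∈ range N, f k x₀) atTop atTop) :
    Tendsto (fun x => ∑' k, f k x) l atTop := by
  refine tendsto_atTop.2 fun M => ?_
  obtain ⟨N, hN⟩ := (hdiv.eventually_gt_atTop M).exists
  have hpartial : ∀ᶠ x in l, M < ∑ k ∈ range N, f k x :=
    hl ((tendsto_finsetSum _ fun k _ => hcont k).eventually (eventually_gt_nhds hN))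
  filter_upwards [hpartial, hsum] with x hMx hx
  exact hMx.le.trans (hx.sum_le_tsum _ fun k _ => hnonneg k x)

theorem sum_range_inv_add_two_sq_le (N : ℕ) :
    ∑ k ∈ Finset.range N, (((k : ℝ) + 2) ^ 2)⁻¹ ≤ 1 - ((N : ℝ) + 1)⁻¹ := by
  induction N with
  | zero => simp
  | succ N ih =>
    rw [Finset.sum_range_succ]
    have htelescope :
        ((N : ℝ) + 1)⁻¹ - ((N : ℝ) + 2)⁻¹ = (((N : ℝ) + 1) * ((N : ℝ) + 2))⁻¹ := by
      field_simp; ring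
    have hstep : (((N : ℝ) + 2) ^ 2)⁻¹ ≤ ((N : ℝ) + 1)⁻¹ - ((N : ℝ) + 2)⁻¹ := by
      rw [htelescope, sq]; gcongr; linarith
    push_cast
    rw [add_assoc, one_add_one_eq_two]
    linarith

noncomputable def zetaSeries (s : ℝ) : ℝ := ∑' k : ℕ, ((k : ℝ) + 1) ^ (-s)

namespace zetaSeries

theorem summable {s : ℝ} (hs : 1 < s) : Summable fun k : ℕ => ((k : ℝ) + 1) ^ (-s) := by
  simpa using (summable_nat_add_iff 1).2 (Real.summable_nat_rpow.2 (neg_lt_neg hs))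

theorem sum_range_lt {s : ℝ} (hs : 1 < s) (n : ℕ) :
    ∑ i ∈ Finset.range n, ((i : ℝ) + 1) ^ (-s) < zetaSeries s := by
  calc ∑ i ∈ Finset.range n, ((i : ℝ) + 1) ^ (-s)
      < ∑ i ∈ Finset.range (n + 1), ((i : ℝ) + 1) ^ (-s) := by
        rw [Finset.sum_range_succ]; exact lt_add_of_pos_right _ (by positivity)
    _ ≤ zetaSeries s := (summable hs).sum_le_tsum _ fun i _ => by positivity

theorem one_lt {s : ℝ} (hs : 1 < s) : 1 < zetaSeries s := by
  simpa using sum_range_lt hs 1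

theorem eq_one_add {s : ℝ} (hs : 1 < s) :
    zetaSeries s = 1 + ∑' k : ℕ, ((k : ℝ) + 2) ^ (-s) := by
  rw [zetaSeries, (summable hs).tsum_eq_zero_add]
  push_cast
  simp only [zero_add, Real.one_rpow, add_assoc, one_add_one_eq_two]

theorem le_one_add_two_rpow {s : ℝ} (hs : 2 ≤ s) :
    zetaSeries s ≤ 1 + (2 : ℝ) ^ (2 - s) := by
  rw [eq_one_add (by linarith)]
  gcongr
  refine Real.tsum_le_of_sum_range_le (fun k => by positivity) fun N => ?_
  have hterm (k : ℕ) :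
      ((k : ℝ) + 2) ^ (-s) ≤ (2 : ℝ) ^ (2 - s) * (((k : ℝ) + 2) ^ 2)⁻¹ := by
    have hk : (0 : ℝ) < (k : ℝ) + 2 := by positivity
    rw [show -s = (2 - s) + (-2 : ℝ) by ring, Real.rpow_add hk, Real.rpow_neg hk.le,
      Real.rpow_two]
    refine mul_le_mul_of_nonneg_right ?_ (by positivity)
    exact Real.rpow_le_rpow_of_nonpos two_pos (by linarith [k.cast_nonneg (α := ℝ)])
      (by linarith)
  calc ∑ k ∈ Finset.range N, ((k : ℝ) + 2) ^ (-s)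
      ≤ (2 : ℝ) ^ (2 - s) * ∑ k ∈ Finset.range N, (((k : ℝ) + 2) ^ 2)⁻¹ := by
        rw [Finset.mul_sum]; exact Finset.sum_le_sum fun k _ => hterm k
    _ ≤ (2 : ℝ) ^ (2 - s) := by
        refine mul_le_of_le_one_right (by positivity) ?_
        linarith [sum_range_inv_add_two_sq_le N, inv_nonneg.2 (by positivity : (0 : ℝ) ≤ N + 1)]

theorem tendsto_nhdsGT_one : Tendsto zetaSeries (𝓝[>] 1) atTop := by
  refine tendsto_tsum_atTop_of_tendsto_sum_range nhdsWithin_le_nhds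
    (fun k => Real.continuousAt_const_rpow (by positivity) |>.comp continuousAt_neg)
    (fun k s => by positivity) (eventually_nhdsWithin_of_forall fun s hs => summable hs) ?_
  simpa [Real.rpow_neg_one] using Real.tendsto_sum_range_one_div_nat_succ_atTop

end zetaSeries

/-- `∑_{i=1}^n p_i^d` for the zeta distribution `p_i = i^{-s} / Z(s)`, reindexed from `0`. -/
noncomputable def zetaMoranSum (n : ℕ) (s d : ℝ) : ℝ :=
  zetaSeries s ^ (-d) * ∑ i ∈ Finset.range n, ((i : ℝ) + 1) ^ (-(s * d))

namespace zetaMoranSum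

variable {n : ℕ} {s d : ℝ}

theorem sum_eq_zetaSeries_rpow (hs : 1 < s) (h : zetaMoranSum n s d = 1) :
    ∑ i ∈ Finset.range n, ((i : ℝ) + 1) ^ (-(s * d)) = zetaSeries s ^ d := by
  have hZ := zetaSeries.one_lt hs
  rw [zetaMoranSum, Real.rpow_neg (by positivity)] at h
  exact (inv_mul_eq_one₀ (by positivity)).1 h |>.symm

theorem lt_one (hs : 1 < s) (hd : 1 ≤ d) : zetaMoranSum n s d < 1 := by
  have hZ := zetaSeries.one_lt hs
  have hsum : ∑ i ∈ Finset.range n, ((i : ℝ) + 1) ^ (-(s * d)) < zetaSeries s ^ d :=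
    calc ∑ i ∈ Finset.range n, ((i : ℝ) + 1) ^ (-(s * d))
        ≤ ∑ i ∈ Finset.range n, ((i : ℝ) + 1) ^ (-s) := by
          gcongr with i
          · linarith [i.cast_nonneg (α := ℝ)]
          · nlinarith
      _ < zetaSeries s := zetaSeries.sum_range_lt hs n
      _ ≤ zetaSeries s ^ d := by
          simpa using Real.rpow_le_rpow_of_exponent_le hZ.le hd
  calc zetaMoranSum n s d < zetaSeries s ^ (-d) * zetaSeries s ^ d :=
        mul_lt_mul_of_pos_left hsum (by positivity)
    _ = 1 := by rw [← Real.rpow_add (by positivity), neg_add_cancel, Real.rpow_zero]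

theorem le_one (hs : 1 < s) (h : zetaMoranSum n s d = 1) : d ≤ 1 := by
  by_contra! hd
  exact (lt_one hs hd.le).ne h

theorem one_sub_two_div_le (hn : 2 ≤ n) (hs : 2 ≤ s) (h : zetaMoranSum n s d = 1) :
    1 - 2 / s ≤ d := by
  have hs₁ : 1 < s := by linarith
  have hZ := zetaSeries.one_lt hs₁
  have hlower : 1 + (2 : ℝ) ^ (-(s * d)) ≤ zetaSeries s ^ d := by
    rw [← sum_eq_zetaSeries_rpow hs₁ h]
    calc 1 + (2 : ℝ) ^ (-(s * d)) = ∑ i ∈ Finset.range 2, ((i : ℝ) + 1) ^ (-(s * d)) := by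
          norm_num [Finset.sum_range_succ]
      _ ≤ _ := Finset.sum_le_sum_of_subset_of_nonneg (Finset.range_subset_range.2 hn)
          fun i _ _ => by positivity
  have hupper : zetaSeries s ^ d ≤ 1 + (2 : ℝ) ^ (2 - s) :=
    calc zetaSeries s ^ d ≤ zetaSeries s := by
          simpa using Real.rpow_le_rpow_of_exponent_le hZ.le (le_one hs₁ h)
      _ ≤ 1 + (2 : ℝ) ^ (2 - s) := zetaSeries.le_one_add_two_rpow hs
  have hexp : -(s * d) ≤ 2 - s :=
    (Real.rpow_le_rpow_left_iff one_lt_two).1 (by linarith)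
  rw [one_sub_div (by positivity), div_le_iff₀ (by positivity)]
  linarith

theorem tendsto_nhdsGT_one (n : ℕ) {c : ℝ} (hc : 0 < c) :
    Tendsto (fun s => zetaMoranSum n s c) (𝓝[>] 1) (𝓝 0) := by
  have hZ : Tendsto (fun s => zetaSeries s ^ (-c)) (𝓝[>] 1) (𝓝 0) :=
    (tendsto_rpow_neg_atTop hc).comp zetaSeries.tendsto_nhdsGT_one
  refine squeeze_zero' ?_ ?_ (by simpa using hZ.mul_const (n : ℝ))
  · filter_upwards [self_mem_nhdsWithin] with s (hs : 1 < s)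
    have := zetaSeries.one_lt hs
    unfold zetaMoranSum
    positivity
  · filter_upwards [self_mem_nhdsWithin] with s (hs : 1 < s)
    have := zetaSeries.one_lt hs
    refine mul_le_mul_of_nonneg_left ?_ (by positivity)
    calc ∑ i ∈ Finset.range n, ((i : ℝ) + 1) ^ (-(s * c))
        ≤ ∑ _i ∈ Finset.range n, (1 : ℝ) := Finset.sum_le_sum fun i _ =>
          Real.rpow_le_one_of_one_le_of_nonpos (by linarith [i.cast_nonneg (α := ℝ)])
            (by nlinarith)
      _ = n := by simp

end zetaMoranSum

theorem zeta_dimension_limits_general (n : ℕ) (hn : 2 ≤ n)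
    (Z : ℝ → ℝ) (hZ : ∀ s : ℝ, Z s = ∑' k : ℕ, ((k : ℝ) + 1) ^ (-s))
    (d : ℝ → ℝ)
    (hd : ∀ s : ℝ, 1 < s → 0 < d s ∧
      Z s ^ (-(d s)) * ∑ i ∈ Finset.range n, ((i : ℝ) + 1) ^ (-(s * d s)) = 1) :
    Tendsto d atTop (𝓝 1) ∧
    ∀ c : ℝ, 0 < c →
      Tendsto (fun s : ℝ => Z s ^ (-c) * ∑ i ∈ Finset.range n, ((i : ℝ) + 1) ^ (-(s * c)))
        (𝓝[>] (1:ℝ)) (𝓝 0) := by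
  obtain rfl : Z = zetaSeries := funext hZ
  refine ⟨?_, fun c hc => zetaMoranSum.tendsto_nhdsGT_one n hc⟩
  have hlower : Tendsto (fun s : ℝ => 1 - 2 / s) atTop (𝓝 1) := by
    simpa using (tendsto_const_nhds (x := (1 : ℝ))).sub (tendsto_const_nhds.div_atTop tendsto_id)
  refine tendsto_of_tendsto_of_tendsto_of_le_of_le' hlower tendsto_const_nhds ?_ ?_
  · filter_upwards [eventually_ge_atTop 2] with s hs
    exact zetaMoranSum.one_sub_two_div_le hn hs (hd s (by linarith)).2
  · filter_upwards [eventually_gt_atTop 1] with s hs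
    exact zetaMoranSum.le_one hs (hd s hs).2

/-- For fixed `n ≥ 2` and the zeta distribution with parameter `s > 1`
(`Z s = ∑_{k≥1} k^{-s}`), if `d(s)` is the unique positive solution of
`Z(s)^{-d} ∑_{i=1}^n i^{-sd} = 1`, then `d(s) → 1` as `s → ∞`, and for every fixed
`d > 0` the left-hand side tends to `0` as `s → 1⁺` (so `d(s) → 0` as `s → 1⁺`). -/
theorem zeta_dimension_limits (n : ℕ) (hn : 2 ≤ n)
    (Z : ℝ → ℝ) (hZ : ∀ s : ℝ, Z s = ∑' k : ℕ, ((k : ℝ) + 1) ^ (-s))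
    (d : ℝ → ℝ)
    (hd : ∀ s : ℝ, 1 < s → 0 < d s ∧
      Z s ^ (-(d s)) * ∑ i ∈ Finset.range n, ((i : ℝ) + 1) ^ (-(s * d s)) = 1)
    (huniq : ∀ s : ℝ, 1 < s → ∀ e : ℝ, 0 < e →
      Z s ^ (-e) * ∑ i ∈ Finset.range n, ((i : ℝ) + 1) ^ (-(s * e)) = 1 → e = d s) :
    Tendsto d atTop (𝓝 1) ∧
    ∀ c : ℝ, 0 < c →
      Tendsto (fun s : ℝ => Z s ^ (-c) * ∑ i ∈ Finset.range n, ((i : ℝ) + 1) ^ (-(s * c)))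
        (𝓝[>] (1:ℝ)) (𝓝 0) :=
  zeta_dimension_limits_general n hn Z hZ d hd
end

section
/- Let (p_i) be a probability distribution supported on ℕ, π the induced coding map, and for x ∈ [0,1) let f(x,n) = lim_{i→∞} (1/i)·#{ j ≤ i : (π^{−1}(x))_j = n } be the frequency of digit n, when the limit exists. Then for Lebesgue-almost every x ∈ [0,1) and every n ∈ ℕ, f(x,n) exists and equals p_n. -/
/-!
The maps `T_n x = p̂_n + p_n x` scale Lebesgue measure by `p_n` and send `[0,1)` onto the pairwise
disjoint intervals `[p̂_n, p̂_{n+1})`, and `π (m :: a) = T_m (π a)`. Sorting a set `A` of digit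
sequences by its first digit therefore gives `λ(π A) = ∑ₘ p_m λ(π {a | m :: a ∈ A})`. By induction
on the position, the event "the `j`-th digit is `n`" has measure `p_n`, and two such events at
different positions are independent. Etemadi's strong law of large numbers, which only needs
pairwise independence, applied to their indicators gives the digit frequencies.
-/

open Set MeasureTheory Filter Topology ProbabilityTheory

namespace ProbabilityTheory

variable {Ω : Type*} [MeasurableSpace Ω] {μ : Measure Ω}

theorem indepFun_indicator_one_of_indepSet {A B : Set Ω} (h : IndepSet A B μ) :
    A.indicator (1 : Ω → ℝ) ⟂ᵢ[μ] B.indicator (1 : Ω → ℝ) := by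
  have hB : Measurable[MeasurableSpace.generateFrom {B}] (B.indicator (1 : Ω → ℝ)) :=
    measurable_const.indicator (MeasurableSpace.measurableSet_generateFrom (mem_singleton B))
  exact Indep.indicator_indepFun 1 (MeasurableSpace.measurableSet_generateFrom (mem_singleton A))
    (indep_of_indep_of_le_right ((IndepSet_iff_Indep A B μ).1 h) hB.comap_le)

theorem identDistrib_indicator_one [IsProbabilityMeasure μ] {A B : Set Ω} (hA : MeasurableSet A)
    (hB : MeasurableSet B) (h : μ A = μ B) :
    IdentDistrib (A.indicator (1 : Ω → ℝ)) (B.indicator 1) μ μ := by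
  refine ⟨(measurable_one.indicator hA).aemeasurable, (measurable_one.indicator hB).aemeasurable,
    Measure.ext fun s hs => ?_⟩
  classical
  rw [Measure.map_apply (measurable_one.indicator hA) hs,
    Measure.map_apply (measurable_one.indicator hB) hs, Pi.one_def,
    indicator_const_preimage_eq_union, indicator_const_preimage_eq_union]
  split_ifs <;> simp [h, prob_compl_eq_one_sub hA, prob_compl_eq_one_sub hB]

open scoped Classical in
theorem ae_tendsto_card_filter_mem_div [IsProbabilityMeasure μ] {E : ℕ → Set Ω}
    (hE : ∀ j, MeasurableSet (E j)) (hindep : Pairwise fun i j => IndepSet (E i) (E j) μ)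
    (hμ : ∀ j, μ (E j) = μ (E 0)) :
    ∀ᵐ ω ∂μ, Tendsto (fun i : ℕ => (((Finset.range i).filter (fun j => ω ∈ E j)).card : ℝ) / i)
      atTop (𝓝 (μ.real (E 0))) := by
  have hslln := strong_law_ae_real (fun j => (E j).indicator (1 : Ω → ℝ))
    ((integrable_const 1).indicator (hE 0))
    (fun _ _ hij => indepFun_indicator_one_of_indepSet (hindep hij))
    (fun j => identDistrib_indicator_one (hE j) (hE 0) (hμ j))
  filter_upwards [hslln] with ω hω
  rw [integral_indicator_one (hE 0)] at hω
  convert hω using 3 with i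
  simp [indicator_apply, Finset.sum_boole]

end ProbabilityTheory

namespace DigitExpansion

-- `cumSum p n`, `digitMap p n` and `code p` are the `p̂_n`, `T_n` and `π` of the statement.
open Finset in
def cumSum (p : ℕ → ℝ) (n : ℕ) : ℝ := ∑ i ∈ range n, p i

def digitMap (p : ℕ → ℝ) (n : ℕ) (x : ℝ) : ℝ := cumSum p n + p n * x

open Finset in
def codeTerm (p : ℕ → ℝ) (a : ℕ → ℕ) (j : ℕ) : ℝ :=
  (∏ i ∈ range (j + 1), p (a i)) * cumSum p (a (j + 1))

noncomputable def code (p : ℕ → ℝ) (a : ℕ → ℕ) : ℝ :=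
  cumSum p (a 0) + ∑' j, codeTerm p a j

def cons (m : ℕ) (a : ℕ → ℕ) : ℕ → ℕ
  | 0 => m
  | n + 1 => a n

theorem cons_head_tail (a : ℕ → ℕ) : cons (a 0) (fun n => a (n + 1)) = a :=
  funext fun n => by cases n <;> rfl

variable {p : ℕ → ℝ}

theorem cumSum_succ (n : ℕ) : cumSum p (n + 1) = cumSum p n + p n :=
  Finset.sum_range_succ _ _

section Positive

variable (hp : ∀ i, 0 < p i)
include hp

theorem cumSum_nonneg (n : ℕ) : 0 ≤ cumSum p n :=
  Finset.sum_nonneg fun i _ => (hp i).le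

theorem monotone_cumSum : Monotone (cumSum p) :=
  monotone_nat_of_le_succ fun n => by simpa [cumSum_succ] using (hp n).le

theorem digitMap_mem_Ico {y : ℝ} (hy : y ∈ Ico 0 1) (n : ℕ) :
    digitMap p n y ∈ Ico (cumSum p n) (cumSum p (n + 1)) := by
  have := hp n
  rw [cumSum_succ, digitMap]
  constructor <;> nlinarith [hy.1, hy.2]

theorem image_digitMap_subset {S : Set ℝ} (hS : S ⊆ Ico 0 1) (n : ℕ) :
    digitMap p n '' S ⊆ Ico (cumSum p n) (cumSum p (n + 1)) :=
  image_subset_iff.2 fun _ hy => digitMap_mem_Ico hp (hS hy) n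

theorem digitMap_injective (n : ℕ) : Function.Injective (digitMap p n) := fun x y h => by
  simpa [digitMap, (hp n).ne'] using h

variable (hsum : HasSum p 1)
include hsum

theorem cumSum_le_one (n : ℕ) : cumSum p n ≤ 1 :=
  sum_le_hasSum _ (fun i _ => (hp i).le) hsum

theorem cumSum_lt_one (n : ℕ) : cumSum p n < 1 := by
  linarith [cumSum_le_one hp hsum (n + 1), cumSum_succ (p := p) n, hp n]

end Positive

section Code

variable (hp : ∀ i, 0 < p i)
include hp

theorem codeTerm_nonneg (a : ℕ → ℕ) (j : ℕ) : 0 ≤ codeTerm p a j :=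
  mul_nonneg (Finset.prod_nonneg fun i _ => (hp (a i)).le) (cumSum_nonneg hp _)

theorem cumSum_le_code (a : ℕ → ℕ) : cumSum p (a 0) ≤ code p a :=
  le_add_of_nonneg_right <| tsum_nonneg (codeTerm_nonneg hp a)

variable (hsum : HasSum p 1)
include hsum

open Finset in
theorem sum_range_codeTerm_le (a : ℕ → ℕ) (J : ℕ) :
    ∑ j ∈ range J, codeTerm p a j ≤ p (a 0) := by
  set P : ℕ → ℝ := fun k => ∏ i ∈ range k, p (a i)
  have hP : ∀ k, 0 ≤ P k := fun k => prod_nonneg fun i _ => (hp (a i)).le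
  -- since `cumSum p n + p n ≤ 1`, the terms are dominated by a telescoping series
  have hterm : ∀ j, codeTerm p a j ≤ P (j + 1) - P (j + 2) := fun j => by
    have hle := cumSum_le_one hp hsum (a (j + 1) + 1)
    rw [cumSum_succ] at hle
    have : P (j + 2) = P (j + 1) * p (a (j + 1)) := prod_range_succ _ _
    have : codeTerm p a j = P (j + 1) * cumSum p (a (j + 1)) := rfl
    nlinarith [hP (j + 1)]
  calc ∑ j ∈ range J, codeTerm p a j
      ≤ ∑ j ∈ range J, (P (j + 1) - P (j + 2)) := sum_le_sum fun j _ => hterm j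
    _ = P 1 - P (J + 1) := sum_range_sub' (fun j => P (j + 1)) J
    _ ≤ p (a 0) := by simp [P, hP (J + 1)]

theorem summable_codeTerm (a : ℕ → ℕ) : Summable (codeTerm p a) :=
  summable_of_sum_range_le (codeTerm_nonneg hp a) (sum_range_codeTerm_le hp hsum a)

open Finset in
theorem code_cons (m : ℕ) (a : ℕ → ℕ) :
    code p (cons m a) = digitMap p m (code p a) := by
  rw [code, (summable_codeTerm hp hsum (cons m a)).tsum_eq_zero_add, digitMap, code, mul_add,
    ← tsum_mul_left]
  simp only [codeTerm, cons, prod_range_succ', prod_range_zero, one_mul]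
  congr 2
  exact tsum_congr fun j => by ring

theorem code_le_cumSum_succ (a : ℕ → ℕ) : code p a ≤ cumSum p (a 0 + 1) := by
  rw [cumSum_succ, code]
  gcongr
  exact Real.tsum_le_of_sum_range_le (codeTerm_nonneg hp a) (sum_range_codeTerm_le hp hsum a)

theorem code_mem_Ico_zero_one (a : ℕ → ℕ) : code p a ∈ Ico 0 1 :=
  ⟨(cumSum_nonneg hp _).trans (cumSum_le_code hp a),
    (code_le_cumSum_succ hp hsum a).trans_lt (cumSum_lt_one hp hsum _)⟩

theorem image_code_subset (A : Set (ℕ → ℕ)) : code p '' A ⊆ Ico 0 1 :=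
  image_subset_iff.2 fun a _ => code_mem_Ico_zero_one hp hsum a

theorem code_mem_Ico (a : ℕ → ℕ) : code p a ∈ Ico (cumSum p (a 0)) (cumSum p (a 0 + 1)) := by
  have h := digitMap_mem_Ico hp (code_mem_Ico_zero_one hp hsum (fun n => a (n + 1))) (a 0)
  rwa [← code_cons hp hsum, cons_head_tail] at h

theorem code_injective : Function.Injective (code p) := by
  have head_eq : ∀ {a b : ℕ → ℕ}, code p a = code p b → a 0 = b 0 := fun {a b} h => by
    by_contra hne
    exact Set.disjoint_left.1 ((monotone_cumSum hp).pairwise_disjoint_on_Ico_succ hne)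
      (code_mem_Ico hp hsum a) (h ▸ code_mem_Ico hp hsum b)
  intro a b h
  funext i
  induction i generalizing a b with
  | zero => exact head_eq h
  | succ i ih =>
    have h0 := head_eq h
    rw [← cons_head_tail a, ← cons_head_tail b, code_cons hp hsum, code_cons hp hsum, h0] at h
    exact ih (digitMap_injective hp _ h)

theorem mem_image_code_iff {dig : ℝ → ℕ → ℕ} (hdig : ∀ x ∈ Ico 0 1, code p (dig x) = x)
    {x : ℝ} (hx : x ∈ Ico 0 1) (A : Set (ℕ → ℕ)) : x ∈ code p '' A ↔ dig x ∈ A :=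
  ⟨fun ⟨_, ha, hax⟩ => code_injective hp hsum (hax.trans (hdig x hx).symm) ▸ ha,
    fun h => ⟨dig x, h, hdig x hx⟩⟩

end Code

theorem iUnion_image_cons_preimage (A : Set (ℕ → ℕ)) : ⋃ m, cons m '' (cons m ⁻¹' A) = A := by
  ext a
  simp only [mem_iUnion, mem_image, mem_preimage]
  constructor
  · rintro ⟨m, b, hb, rfl⟩
    exact hb
  · intro ha
    exact ⟨a 0, _, (cons_head_tail a).symm ▸ ha, cons_head_tail a⟩

section Measure

variable (hp : ∀ i, 0 < p i)
include hp

theorem measurableEmbedding_digitMap (n : ℕ) : MeasurableEmbedding (digitMap p n) :=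
  ((Homeomorph.mulLeft₀ (p n) (hp n).ne').trans
    (Homeomorph.addLeft (cumSum p n))).measurableEmbedding

open scoped Pointwise in
theorem volume_image_digitMap (n : ℕ) (S : Set ℝ) :
    volume (digitMap p n '' S) = ENNReal.ofReal (p n) * volume S := by
  have : digitMap p n '' S = (cumSum p n + ·) '' (p n • S) := by
    simp only [← image_smul, image_image, smul_eq_mul]
    rfl
  rw [this, image_add_left, measure_preimage_add, Measure.addHaar_smul, Module.finrank_self,
    pow_one, abs_of_pos (hp n)]

variable (hsum : HasSum p 1)
include hsum

theorem tsum_ofReal_eq_one : ∑' n, ENNReal.ofReal (p n) = 1 := by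
  rw [← ENNReal.ofReal_tsum_of_nonneg (fun n => (hp n).le) hsum.summable, hsum.tsum_eq,
    ENNReal.ofReal_one]

theorem image_code_eq_iUnion (A : Set (ℕ → ℕ)) :
    code p '' A = ⋃ m, digitMap p m '' (code p '' (cons m ⁻¹' A)) := by
  conv_lhs => rw [← iUnion_image_cons_preimage A]
  simp only [image_iUnion, image_image, code_cons hp hsum]

theorem measurableSet_image_code {A : Set (ℕ → ℕ)}
    (hA : ∀ m, MeasurableSet (code p '' (cons m ⁻¹' A))) : MeasurableSet (code p '' A) := by
  rw [image_code_eq_iUnion hp hsum]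
  exact .iUnion fun m => (measurableEmbedding_digitMap hp m).measurableSet_image.2 (hA m)

theorem volume_image_code {A : Set (ℕ → ℕ)}
    (hA : ∀ m, MeasurableSet (code p '' (cons m ⁻¹' A))) :
    volume (code p '' A) = ∑' m, ENNReal.ofReal (p m) * volume (code p '' (cons m ⁻¹' A)) := by
  have hdisj : Pairwise (Function.onFun Disjoint
      fun m => digitMap p m '' (code p '' (cons m ⁻¹' A))) :=
    (monotone_cumSum hp).pairwise_disjoint_on_Ico_succ.mono fun m l h => h.mono
      (image_digitMap_subset hp (image_code_subset hp hsum _) m)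
      (image_digitMap_subset hp (image_code_subset hp hsum _) l)
  rw [image_code_eq_iUnion hp hsum, measure_iUnion hdisj
    fun m => (measurableEmbedding_digitMap hp m).measurableSet_image.2 (hA m)]
  simp only [volume_image_digitMap hp]

end Measure

instance isProbabilityMeasure_restrict_Ico_zero_one :
    IsProbabilityMeasure (volume.restrict (Ico (0 : ℝ) 1)) :=
  ⟨by simp⟩

section Surjective

variable (hp : ∀ i, 0 < p i) (hsum : HasSum p 1) (hsurj : Ico 0 1 ⊆ range (code p))
include hp hsum hsurj

theorem range_code : range (code p) = Ico 0 1 :=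
  (range_subset_iff.2 (code_mem_Ico_zero_one hp hsum)).antisymm hsurj

theorem measurableSet_image_code_setOf_const (P : Prop) : MeasurableSet (code p '' {_a | P}) := by
  by_cases h : P <;> simp [h, range_code hp hsum hsurj]

theorem volume_image_code_setOf_const (P : Prop) [Decidable P] :
    volume (code p '' {_a | P}) = if P then 1 else 0 := by
  by_cases h : P <;> simp [h, range_code hp hsum hsurj]

theorem measurableSet_image_code_digit (j n : ℕ) : MeasurableSet (code p '' {a | a j = n}) := by
  induction j with
  | zero => exact measurableSet_image_code hp hsum fun m =>
      measurableSet_image_code_setOf_const hp hsum hsurj (m = n)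
  | succ j ih => exact measurableSet_image_code hp hsum fun _ => ih

theorem measurableSet_image_code_preimage_cons_digit (m j n : ℕ) :
    MeasurableSet (code p '' (cons m ⁻¹' {a | a j = n})) := by
  cases j with
  | zero => exact measurableSet_image_code_setOf_const hp hsum hsurj (m = n)
  | succ j => exact measurableSet_image_code_digit hp hsum hsurj j n

theorem volume_image_code_digit (j n : ℕ) :
    volume (code p '' {a | a j = n}) = ENNReal.ofReal (p n) := by
  have hA := measurableSet_image_code_preimage_cons_digit hp hsum hsurj
  induction j with
  | zero =>
    rw [volume_image_code hp hsum (hA · 0 n)]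
    simp [cons, volume_image_code_setOf_const hp hsum hsurj]
  | succ j ih =>
    rw [volume_image_code hp hsum (hA · _ n)]
    simp [cons, ih, ENNReal.tsum_mul_right, tsum_ofReal_eq_one hp hsum]

theorem volume_image_code_digit_inter {i j : ℕ} (hij : i ≠ j) (m n : ℕ) :
    volume (code p '' ({a | a i = m} ∩ {a | a j = n})) =
      ENNReal.ofReal (p m) * ENNReal.ofReal (p n) := by
  have hmeas : ∀ i j l, MeasurableSet (code p '' (cons l ⁻¹' ({a | a i = m} ∩ {a | a j = n}))) :=
    fun i j l => by
      rw [preimage_inter, image_inter (code_injective hp hsum)]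
      exact (measurableSet_image_code_preimage_cons_digit hp hsum hsurj l i m).inter
        (measurableSet_image_code_preimage_cons_digit hp hsum hsurj l j n)
  induction i generalizing j with
  | zero =>
    obtain ⟨j, rfl⟩ := Nat.exists_eq_succ_of_ne_zero hij.symm
    rw [volume_image_code hp hsum (hmeas 0 _), tsum_eq_single m fun l hl => by simp [cons, hl]]
    simp [cons, volume_image_code_digit hp hsum hsurj]
  | succ i ih =>
    rw [volume_image_code hp hsum (hmeas _ _)]
    cases j with
    | zero =>
      rw [tsum_eq_single n fun l hl => by simp [cons, hl]]
      simp [cons, volume_image_code_digit hp hsum hsurj, mul_comm]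
    | succ j =>
      simp [cons, ih (j := j) (by omega), ENNReal.tsum_mul_right, tsum_ofReal_eq_one hp hsum]

theorem restrict_image_code_digit (j n : ℕ) :
    volume.restrict (Ico 0 1) (code p '' {a | a j = n}) = ENNReal.ofReal (p n) := by
  rw [Measure.restrict_eq_self _ (image_code_subset hp hsum _),
    volume_image_code_digit hp hsum hsurj]

theorem indepSet_image_code_digit {i j : ℕ} (hij : i ≠ j) (m n : ℕ) :
    IndepSet (code p '' {a | a i = m}) (code p '' {a | a j = n}) (volume.restrict (Ico 0 1)) := by
  rw [indepSet_iff_measure_inter_eq_mul (measurableSet_image_code_digit hp hsum hsurj i m)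
      (measurableSet_image_code_digit hp hsum hsurj j n) (volume.restrict (Ico 0 1)),
    ← image_inter (code_injective hp hsum),
    Measure.restrict_eq_self _ (image_code_subset hp hsum _),
    restrict_image_code_digit hp hsum hsurj, restrict_image_code_digit hp hsum hsurj,
    volume_image_code_digit_inter hp hsum hsurj hij]

end Surjective

end DigitExpansion

open DigitExpansion in
/-- For Lebesgue-almost every `x ∈ [0,1)` and every digit `n`, the
frequency of the digit `n` in the digit sequence of `x` exists and equals `p n`.
Here `dig` is the inverse of the coding bijection `π`. -/
theorem digit_frequency_ae
    (p : ℕ → ℝ) (hp : ∀ i, p i ∈ Set.Ioo (0:ℝ) 1) (hsum : HasSum p 1)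
    (phat : ℕ → ℝ) (hphat : ∀ n, phat n = ∑ i ∈ Finset.range n, p i)
    (π : (ℕ → ℕ) → ℝ)
    (hπ : ∀ a : ℕ → ℕ, π a = phat (a 0) +
      ∑' j : ℕ, (∏ i ∈ Finset.range (j + 1), p (a i)) * phat (a (j + 1)))
    (dig : ℝ → (ℕ → ℕ)) (hdig : ∀ x ∈ Set.Ico (0:ℝ) 1, π (dig x) = x) :
    ∀ᵐ x ∂(volume.restrict (Set.Ico (0:ℝ) 1)), ∀ n : ℕ,
      Tendsto (fun i : ℕ =>
          ((Finset.range i).filter (fun j => dig x j = n)).card / (i : ℝ))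
        atTop (𝓝 (p n)) := by
  obtain rfl : phat = cumSum p := funext hphat
  obtain rfl : π = code p := funext hπ
  have hpos : ∀ i, 0 < p i := fun i => (hp i).1
  have hsurj : Ico 0 1 ⊆ range (code p) := fun x hx => ⟨dig x, hdig x hx⟩
  rw [ae_all_iff]
  intro n
  have hfreq := ae_tendsto_card_filter_mem_div (E := fun j => code p '' {a | a j = n})
    (measurableSet_image_code_digit hpos hsum hsurj · n)
    (fun _ _ hij => indepSet_image_code_digit hpos hsum hsurj hij n n)
    (fun j => by simp only [restrict_image_code_digit hpos hsum hsurj])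
  rw [measureReal_def, restrict_image_code_digit hpos hsum hsurj,
    ENNReal.toReal_ofReal (hpos n).le] at hfreq
  filter_upwards [hfreq, ae_restrict_mem measurableSet_Ico] with x hx hxI
  convert hx using 5
  classical
  exact Finset.filter_congr fun j _ => (mem_image_code_iff hpos hsum hdig hxI {a | a j = n}).symm
end
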